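/- arXiv:1105.5499 — 2 statements merged into one kernel-verified Lean document; each statement's English description precedes it below -/
import Mathlib

section
/- Let 0 < p₁ ≤ 1 and 2 ≤ p₂ ≤ ∞. Then there exists a constant C > 0 such that for all n ∈ ℕ, the n-th Gelfand number of the identity map from ℓ_{p₁}^{2n} to ℓ_{p₂}^{2n} satisfies c_n(id : ℓ_{p₁}^{2n} → ℓ_{p₂}^{2n}) ≥ C · n^{1/2 − 1/p₁}. -/
open scoped ENNReal BigOperators

/-- The ℓ_p quasi-norm on ℝ^N, for `p : ℝ≥0∞` (with `p = ∞` giving the sup-norm). -/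
noncomputable def pNorm (p : ℝ≥0∞) {N : ℕ} (x : Fin N → ℝ) : ℝ :=
  if p = ∞ then ⨆ i, |x i| else (∑ i, |x i| ^ p.toReal) ^ (1 / p.toReal)

/-- The n-th Kolmogorov number of the identity map `id : ℓ_p^N → ℓ_q^N`. -/
noncomputable def kolmogorovNumber (p q : ℝ≥0∞) (N n : ℕ) : ℝ :=
  sInf { r : ℝ | ∃ V : Submodule ℝ (Fin N → ℝ), Module.finrank ℝ (↥V) < n ∧
    r = sSup { s : ℝ | ∃ x : Fin N → ℝ, pNorm p x ≤ 1 ∧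
      s = sInf { t : ℝ | ∃ v ∈ V, t = pNorm q (x - v) } } }

/-- The n-th Gelfand number of the identity map `id : ℓ_p^N → ℓ_q^N`. -/
noncomputable def gelfandNumber (p q : ℝ≥0∞) (N n : ℕ) : ℝ :=
  sInf { r : ℝ | ∃ M : Submodule ℝ (Fin N → ℝ), N - Module.finrank ℝ (↥M) < n ∧
    r = sSup { s : ℝ | ∃ x ∈ M, pNorm p x ≤ 1 ∧ s = pNorm q x } }

/-- The n-th approximation number of the identity map `id : ℓ_p^N → ℓ_q^N`. -/
noncomputable def approxNumber (p q : ℝ≥0∞) (N n : ℕ) : ℝ :=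
  sInf { r : ℝ | ∃ L : (Fin N → ℝ) →ₗ[ℝ] (Fin N → ℝ),
    Module.finrank ℝ (↥(LinearMap.range L)) < n ∧
    r = sSup { s : ℝ | ∃ x : Fin N → ℝ, pNorm p x ≤ 1 ∧ s = pNorm q (x - L x) } }

/-
If `M ⊆ ℝ^{2n}` has codimension `< n`, then `dim M > n`, so the orthogonal projection `P` onto `M`
has trace `∑ᵢ ‖P eᵢ‖² = dim M > n` and some coordinate satisfies `‖P eᵢ‖² > 1/2`. The vector
`x = P eᵢ ∈ M` has `‖x‖₂ ≤ 1` and `xᵢ = ⟪eᵢ, P eᵢ⟫ = ‖P eᵢ‖² > 1/2`, hence `‖x‖_{p₂} > 1/2`, while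
Hölder gives `‖x‖_{p₁} ≤ (2n)^{1/p₁ - 1/2} ‖x‖₂`. Normalising `x` in `ℓ_{p₁}` gives the bound.
-/

open Module

section pNorm

variable {N : ℕ}

lemma pNorm_of_ne_top {p : ℝ≥0∞} (hp : p ≠ ∞) (x : Fin N → ℝ) :
    pNorm p x = (∑ i, |x i| ^ p.toReal) ^ (1 / p.toReal) :=
  if_neg hp

lemma abs_le_pNorm {p : ℝ≥0∞} (hp : p ≠ 0) (x : Fin N → ℝ) (i : Fin N) : |x i| ≤ pNorm p x := by
  by_cases htop : p = ∞
  · rw [pNorm, if_pos htop]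
    exact le_ciSup (Set.finite_range fun j => |x j|).bddAbove i
  · have hr : 0 < p.toReal := ENNReal.toReal_pos hp htop
    rw [pNorm_of_ne_top htop]
    calc |x i| = (|x i| ^ p.toReal) ^ (1 / p.toReal) := by
          rw [← Real.rpow_mul (abs_nonneg _), mul_one_div_cancel hr.ne', Real.rpow_one]
      _ ≤ (∑ j, |x j| ^ p.toReal) ^ (1 / p.toReal) := by
          gcongr
          exact Finset.single_le_sum (f := fun j => |x j| ^ p.toReal)
            (fun j _ => by positivity) (Finset.mem_univ i)

lemma pNorm_smul {p : ℝ≥0∞} (hp : p ≠ 0) (c : ℝ) (x : Fin N → ℝ) :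
    pNorm p (c • x) = |c| * pNorm p x := by
  by_cases htop : p = ∞
  · simp only [pNorm, if_pos htop, Pi.smul_apply, smul_eq_mul, abs_mul]
    exact (Real.mul_iSup_of_nonneg (abs_nonneg c) _).symm
  · have hr : 0 < p.toReal := ENNReal.toReal_pos hp htop
    simp only [pNorm_of_ne_top htop, Pi.smul_apply, smul_eq_mul, abs_mul,
      Real.mul_rpow (abs_nonneg c) (abs_nonneg _), ← Finset.mul_sum]
    rw [Real.mul_rpow (by positivity) (by positivity), ← Real.rpow_mul (abs_nonneg c),
      mul_one_div_cancel hr.ne', Real.rpow_one]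

lemma pNorm_le_card {p : ℝ≥0∞} (hp : 1 ≤ p) {x : Fin N → ℝ} (hx : ∀ i, |x i| ≤ 1) :
    pNorm p x ≤ N := by
  by_cases htop : p = ∞
  · rw [pNorm, if_pos htop]
    exact Real.iSup_le (fun i => (hx i).trans (by exact_mod_cast i.pos)) (Nat.cast_nonneg N)
  · have hr : 1 ≤ p.toReal := by
      simpa using ENNReal.toReal_mono htop hp
    rw [pNorm_of_ne_top htop]
    calc (∑ i, |x i| ^ p.toReal) ^ (1 / p.toReal)
        ≤ (N : ℝ) ^ (1 / p.toReal) := by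
          gcongr
          simpa using Finset.sum_le_sum (s := Finset.univ) fun i _ =>
            Real.rpow_le_one (abs_nonneg (x i)) (hx i) (by positivity)
      _ ≤ N := by
          rcases N.eq_zero_or_pos with rfl | hN
          · rw [Nat.cast_zero, Real.zero_rpow (by positivity)]
          · exact Real.rpow_le_self_of_one_le (by exact_mod_cast hN)
              (div_le_one_of_le₀ hr (by positivity))

lemma pNorm_le_rpow_mul_pNorm {p q : ℝ} (hp : 0 < p) (hpq : p ≤ q) (x : Fin N → ℝ) :
    pNorm (ENNReal.ofReal p) x ≤ (N : ℝ) ^ (1 / p - 1 / q) * pNorm (ENNReal.ofReal q) x := by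
  have hq : 0 < q := hp.trans_le hpq
  rw [pNorm_of_ne_top ENNReal.ofReal_ne_top, pNorm_of_ne_top ENNReal.ofReal_ne_top,
    ENNReal.toReal_ofReal hp.le, ENNReal.toReal_ofReal hq.le]
  -- Hölder's inequality for the exponent `q / p ≥ 1`, applied to `|x i| ^ p`
  have holder := Real.rpow_sum_le_const_mul_sum_rpow_of_nonneg Finset.univ
    (f := fun i => |x i| ^ p) ((one_le_div hp).mpr hpq) (fun i _ => by positivity)
  simp only [Finset.card_univ, Fintype.card_fin, ← Real.rpow_mul (abs_nonneg _),
    mul_div_cancel₀ q hp.ne'] at holder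
  calc (∑ i, |x i| ^ p) ^ (1 / p) = ((∑ i, |x i| ^ p) ^ (q / p)) ^ (1 / q) := by
        rw [← Real.rpow_mul (by positivity)]; congr 1; field_simp
    _ ≤ ((N : ℝ) ^ (q / p - 1) * ∑ i, |x i| ^ q) ^ (1 / q) := by gcongr
    _ = (N : ℝ) ^ (1 / p - 1 / q) * (∑ i, |x i| ^ q) ^ (1 / q) := by
        rw [Real.mul_rpow (by positivity) (by positivity), ← Real.rpow_mul (by positivity)]
        congr 2; field_simp

end pNorm

lemma pNorm_two_eq_norm {N : ℕ} (x : Fin N → ℝ) :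
    pNorm (ENNReal.ofReal 2) x = ‖WithLp.toLp 2 x‖ := by
  rw [pNorm_of_ne_top ENNReal.ofReal_ne_top, ENNReal.toReal_ofReal zero_le_two,
    EuclideanSpace.norm_eq, Real.sqrt_eq_rpow]
  simp [Real.norm_eq_abs]

lemma le_gelfandNumber {p q : ℝ≥0∞} {N n : ℕ} {c : ℝ} (hp : p ≠ 0) (hq : 1 ≤ q) (hn : 0 < n)
    (h : ∀ M : Submodule ℝ (Fin N → ℝ), N - finrank ℝ M < n →
      ∃ x ∈ M, 0 < pNorm p x ∧ c * pNorm p x ≤ pNorm q x) :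
    c ≤ gelfandNumber p q N n := by
  refine le_csInf ⟨_, ⊤, by simpa using hn, rfl⟩ ?_
  rintro r ⟨M, hM, rfl⟩
  obtain ⟨x, hxM, hx_pos, hx⟩ := h M hM
  have hbdd : BddAbove {s : ℝ | ∃ y ∈ M, pNorm p y ≤ 1 ∧ s = pNorm q y} := by
    refine ⟨N, ?_⟩
    rintro s ⟨y, -, hy, rfl⟩
    exact pNorm_le_card hq fun i => (abs_le_pNorm hp y i).trans hy
  have hq0 : q ≠ 0 := (lt_of_lt_of_le zero_lt_one hq).ne'
  refine le_csSup_of_le hbdd ⟨(pNorm p x)⁻¹ • x, M.smul_mem _ hxM, ?_, rfl⟩ ?_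
  · rw [pNorm_smul hp, abs_inv, abs_of_pos hx_pos, inv_mul_cancel₀ hx_pos.ne']
  · rw [pNorm_smul hq0, abs_inv, abs_of_pos hx_pos, le_inv_mul_iff₀ hx_pos, mul_comm]
    exact hx

lemma Submodule.trace_starProjection {𝕜 E : Type*} [RCLike 𝕜] [NormedAddCommGroup E]
    [InnerProductSpace 𝕜 E] [FiniteDimensional 𝕜 E] (K : Submodule 𝕜 E) :
    LinearMap.trace 𝕜 E K.starProjection = finrank 𝕜 K :=
  LinearMap.IsProj.trace
    ⟨K.starProjection_apply_mem, fun _ hx => K.starProjection_eq_self_iff.mpr hx⟩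

lemma Submodule.sum_norm_sq_starProjection {ι E : Type*} [Fintype ι] [NormedAddCommGroup E]
    [InnerProductSpace ℝ E] [FiniteDimensional ℝ E] (K : Submodule ℝ E)
    (b : OrthonormalBasis ι ℝ E) :
    ∑ i, ‖K.starProjection (b i)‖ ^ 2 = finrank ℝ K := by
  rw [← K.trace_starProjection, LinearMap.trace_eq_sum_inner _ b]
  refine Finset.sum_congr rfl fun i _ => ?_
  rw [real_inner_comm]
  simpa using (K.re_inner_starProjection_eq_normSq (b i)).symm

lemma Submodule.exists_half_lt_norm_sq_starProjection {ι E : Type*} [Fintype ι]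
    [NormedAddCommGroup E] [InnerProductSpace ℝ E] [FiniteDimensional ℝ E] (K : Submodule ℝ E)
    (b : OrthonormalBasis ι ℝ E) (hK : finrank ℝ E < 2 * finrank ℝ K) :
    ∃ i, 1 / 2 < ‖K.starProjection (b i)‖ ^ 2 := by
  suffices ∑ _i : ι, (1 / 2 : ℝ) < ∑ i, ‖K.starProjection (b i)‖ ^ 2 by
    simpa using Finset.exists_lt_of_sum_lt this
  rw [K.sum_norm_sq_starProjection b, Finset.sum_const, Finset.card_univ,
    ← finrank_eq_card_basis b.toBasis, nsmul_eq_mul]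
  have : (finrank ℝ E : ℝ) < 2 * finrank ℝ K := by exact_mod_cast hK
  linarith

lemma Submodule.exists_mem_norm_le_one_half_lt_apply {ι : Type*} [Fintype ι]
    (K : Submodule ℝ (EuclideanSpace ℝ ι)) (hK : Fintype.card ι < 2 * finrank ℝ K) :
    ∃ x ∈ K, ‖x‖ ≤ 1 ∧ ∃ i, 1 / 2 < x i := by
  classical
  let e := EuclideanSpace.basisFun ι ℝ
  obtain ⟨i, hi⟩ := K.exists_half_lt_norm_sq_starProjection e (by simpa using hK)
  refine ⟨K.starProjection (e i), K.starProjection_apply_mem _, ?_, i, ?_⟩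
  · simpa [e] using K.norm_starProjection_apply_le (e i)
  · have hcoord : K.starProjection (e i) i = ‖K.starProjection (e i)‖ ^ 2 := by
      have := K.re_inner_starProjection_eq_normSq (e i)
      rw [real_inner_comm] at this
      simpa [e, EuclideanSpace.inner_single_left] using this
    rwa [hcoord]

lemma exists_mem_pNorm_two_le_one_half_lt_apply {N : ℕ} (M : Submodule ℝ (Fin N → ℝ))
    (hM : N < 2 * finrank ℝ M) :
    ∃ x ∈ M, pNorm (ENNReal.ofReal 2) x ≤ 1 ∧ ∃ i, 1 / 2 < x i := by
  let e : (Fin N → ℝ) ≃ₗ[ℝ] EuclideanSpace ℝ (Fin N) := (WithLp.linearEquiv 2 ℝ _).symm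
  obtain ⟨y, hyK, hy, i, hi⟩ :=
    (M.map (e : (Fin N → ℝ) →ₗ[ℝ] EuclideanSpace ℝ (Fin N))).exists_mem_norm_le_one_half_lt_apply
      (by rwa [LinearEquiv.finrank_map_eq, Fintype.card_fin])
  obtain ⟨x, hxM, rfl⟩ := Submodule.mem_map.mp hyK
  exact ⟨x, hxM, by rw [pNorm_two_eq_norm]; simpa [e] using hy, i, by simpa [e] using hi⟩

/-- For `0 < p₁ ≤ 1` and `2 ≤ p₂ ≤ ∞` there is `C > 0` with
`c_n(id : ℓ_{p₁}^{2n} → ℓ_{p₂}^{2n}) ≥ C·n^{1/2 - 1/p₁}` for all `n`. -/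
theorem gelfand_lower_large_p2 (p₁ : ℝ) (p₂ : ℝ≥0∞) (h1 : 0 < p₁) (h2 : p₁ ≤ 1)
    (h3 : 2 ≤ p₂) :
    ∃ C : ℝ, 0 < C ∧ ∀ n : ℕ,
      C * (n : ℝ) ^ (1/2 - 1/p₁) ≤ gelfandNumber (ENNReal.ofReal p₁) p₂ (2 * n) n := by
  have ha : 1 / 2 - 1 / p₁ < 0 := by
    have : 1 ≤ 1 / p₁ := by rw [le_div_iff₀ h1]; linarith
    linarith
  have hp₁ : ENNReal.ofReal p₁ ≠ 0 := by simpa using h1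
  refine ⟨2 ^ (1 / 2 - 1 / p₁) / 2, by positivity, fun n => ?_⟩
  rcases n.eq_zero_or_pos with rfl | hn
  -- no subspace has codimension `< 0`, so `c_0 = sInf ∅ = 0`, while `0 ^ a = 0` for `a ≠ 0`
  · rw [Nat.cast_zero, Real.zero_rpow ha.ne, mul_zero]
    simp [gelfandNumber]
  refine le_gelfandNumber hp₁ (one_le_two.trans h3) hn fun M hM => ?_
  obtain ⟨x, hxM, hx2, i, hxi⟩ := exists_mem_pNorm_two_le_one_half_lt_apply M (by omega)
  refine ⟨x, hxM, (abs_pos_of_pos (by linarith)).trans_le (abs_le_pNorm hp₁ x i), ?_⟩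
  have hconst : 2 ^ (1 / 2 - 1 / p₁) / 2 * (n : ℝ) ^ (1 / 2 - 1 / p₁) *
      ((2 * n : ℕ) : ℝ) ^ (1 / p₁ - 1 / 2) = 1 / 2 := by
    rw [Nat.cast_mul, Nat.cast_ofNat, Real.mul_rpow zero_le_two n.cast_nonneg, ← neg_sub,
      Real.rpow_neg zero_le_two, Real.rpow_neg n.cast_nonneg]
    field_simp
  calc 2 ^ (1 / 2 - 1 / p₁) / 2 * (n : ℝ) ^ (1 / 2 - 1 / p₁) * pNorm (ENNReal.ofReal p₁) x
      ≤ 2 ^ (1 / 2 - 1 / p₁) / 2 * (n : ℝ) ^ (1 / 2 - 1 / p₁) *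
          (((2 * n : ℕ) : ℝ) ^ (1 / p₁ - 1 / 2) * pNorm (ENNReal.ofReal 2) x) :=
        mul_le_mul_of_nonneg_left (pNorm_le_rpow_mul_pNorm h1 (by linarith) x) (by positivity)
    _ = 1 / 2 * pNorm (ENNReal.ofReal 2) x := by rw [← mul_assoc, hconst]
    _ ≤ |x i| := by linarith [le_abs_self (x i)]
    _ ≤ pNorm p₂ x := abs_le_pNorm (by positivity) x i
end

section
/- Let 1 ≤ p₁ < ∞ and set β = max(2, p₁). Then there exists a constant C > 0 such that for every N ∈ ℕ with N ≥ 4 and n = ⌊N/4⌋, the n-th Kolmogorov number of the identity map from ℓ_{p₁}^N to ℓ_∞^N satisfies d_n(id : ℓ_{p₁}^N → ℓ_∞^N) ≥ C · n^{-1/β}. -/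
open scoped ENNReal BigOperators

/-!
Lower bounds for `d_n` come from a dual functional: if `w ⊥ V` then
`⟪w, x⟫ ≤ ‖w‖₁ · ‖x - v‖_∞` for every `v ∈ V`. Take `w = P e_i`, where `P` is the orthogonal
projection onto `Vᗮ`. Since `∑ᵢ ⟪e_i, P e_i⟫ = tr P = N - dim V`, some `i` has
`w_i = ‖w‖₂² ≥ (N - dim V)/N ≥ 3/4`. For `p₁ ≥ 2` test against the flat vector
`x = N^{-1/p₁} sign w`, which gives distance `≥ N^{-1/p₁}`; for `p₁ < 2` test against `x = e_i`,
which by Cauchy–Schwarz gives distance `≥ w_i / ‖w‖₁ ≥ √(w_i / N) ≳ N^{-1/2}`.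
-/

open scoped InnerProductSpace
open Module

lemma Submodule.sum_inner_starProjection_eq_finrank {𝕜 ι E : Type*} [RCLike 𝕜] [Fintype ι]
    [NormedAddCommGroup E] [InnerProductSpace 𝕜 E] [FiniteDimensional 𝕜 E]
    (K : Submodule 𝕜 E) (b : OrthonormalBasis ι 𝕜 E) :
    ∑ i, ⟪b i, K.starProjection (b i)⟫_𝕜 = finrank 𝕜 K := by
  have h := (LinearMap.IsIdempotentElem.isProj_range _
    (ContinuousLinearMap.IsIdempotentElem.toLinearMap K.isIdempotentElem_starProjection)).trace
  rwa [LinearMap.trace_eq_sum_inner _ b, K.range_starProjection] at h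

lemma Submodule.exists_orthogonal_with_large_coord {ι : Type*} [Fintype ι] [Nonempty ι]
    (V : Submodule ℝ (ι → ℝ)) :
    ∃ (w : ι → ℝ) (i : ι), (∀ v ∈ V, w ⬝ᵥ v = 0) ∧ w ⬝ᵥ w = w i ∧
      (Fintype.card ι - finrank ℝ V : ℝ) ≤ Fintype.card ι * w i := by
  classical
  set e := (WithLp.linearEquiv 2 ℝ (ι → ℝ)).symm
  set K := (V.map e.toLinearMap)ᗮ
  have hK : (finrank ℝ K : ℝ) = Fintype.card ι - finrank ℝ V := by
    have := (V.map e.toLinearMap).finrank_add_finrank_orthogonal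
    rw [LinearEquiv.finrank_map_eq, finrank_euclideanSpace] at this
    rw [eq_sub_iff_add_eq', ← this]; push_cast; rfl
  have hsum := K.sum_inner_starProjection_eq_finrank (EuclideanSpace.basisFun ι ℝ)
  simp only [EuclideanSpace.basisFun_apply] at hsum
  obtain ⟨i, -, hi⟩ := Finset.exists_le_of_sum_le Finset.univ_nonempty
    (f := fun _ => (Fintype.card ι - finrank ℝ V : ℝ))
    (g := fun i => Fintype.card ι *
      ⟪EuclideanSpace.single i 1, K.starProjection (EuclideanSpace.single i 1)⟫_ℝ)
    (by rw [Finset.sum_const, ← Finset.mul_sum, hsum, hK]; simp)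
  set s : EuclideanSpace ℝ ι := EuclideanSpace.single i 1
  have hdiag : (K.starProjection s).ofLp i = ⟪s, K.starProjection s⟫_ℝ := by
    simp [s, EuclideanSpace.inner_single_left]
  refine ⟨(K.starProjection s).ofLp, i, fun v hv => ?_, ?_, hdiag ▸ hi⟩
  · have h := Submodule.inner_right_of_mem_orthogonal (Submodule.mem_map_of_mem hv)
      (K.starProjection_apply_mem s)
    simpa [EuclideanSpace.inner_eq_star_dotProduct, dotProduct_comm, e] using h
  · have h := K.inner_starProjection_left_eq_right s (K.starProjection s)
    rw [K.starProjection_eq_self_iff.mpr (K.starProjection_apply_mem s), ← hdiag] at h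
    rwa [EuclideanSpace.inner_eq_star_dotProduct, star_trivial] at h

section pNorm

variable {N : ℕ} {p : ℝ}

lemma pNorm_top_eq (x : Fin N → ℝ) : pNorm ∞ x = ⨆ i, |x i| := if_pos rfl

lemma pNorm_ofReal (hp : 0 ≤ p) (x : Fin N → ℝ) :
    pNorm (ENNReal.ofReal p) x = (∑ i, |x i| ^ p) ^ (1 / p) := by
  simp [pNorm, ENNReal.toReal_ofReal hp]

lemma pNorm_top_nonneg (x : Fin N → ℝ) : 0 ≤ pNorm ∞ x := by
  rw [pNorm_top_eq]
  exact Real.iSup_nonneg fun i => abs_nonneg _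

lemma abs_apply_le_pNorm_top (x : Fin N → ℝ) (j : Fin N) : |x j| ≤ pNorm ∞ x := by
  rw [pNorm_top_eq]
  exact le_ciSup (Set.finite_range fun i => |x i|).bddAbove j

lemma abs_apply_le_pNorm_ofReal (hp : 0 < p) (x : Fin N → ℝ) (j : Fin N) :
    |x j| ≤ pNorm (ENNReal.ofReal p) x := by
  rw [pNorm_ofReal hp.le]
  calc |x j| = (|x j| ^ p) ^ (1 / p) := by
        rw [one_div, Real.rpow_rpow_inv (abs_nonneg _) hp.ne']
    _ ≤ (∑ i, |x i| ^ p) ^ (1 / p) := by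
        gcongr
        exact Finset.single_le_sum (f := fun i => |x i| ^ p)
          (fun i _ => by positivity) (Finset.mem_univ j)

lemma pNorm_top_le_pNorm_ofReal (hp : 0 < p) (x : Fin N → ℝ) :
    pNorm ∞ x ≤ pNorm (ENNReal.ofReal p) x := by
  rw [pNorm_top_eq]
  exact Real.iSup_le (abs_apply_le_pNorm_ofReal hp x) (by rw [pNorm_ofReal hp.le]; positivity)

lemma pNorm_ofReal_single (hp : 0 < p) (i : Fin N) :
    pNorm (ENNReal.ofReal p) (Pi.single i 1) = 1 := by
  rw [pNorm_ofReal hp.le, Finset.sum_eq_single i (fun j _ hj => by simp [hj, hp.ne']) (by simp)]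
  simp

lemma pNorm_ofReal_le_one (hp : 0 < p) {x : Fin N → ℝ} (hx : ∀ j, |x j| ≤ (N : ℝ) ^ (-(1 / p))) :
    pNorm (ENNReal.ofReal p) x ≤ 1 := by
  have hsum : ∑ j, |x j| ^ p ≤ 1 := calc
    ∑ j, |x j| ^ p ≤ ∑ _j : Fin N, ((N : ℝ) ^ (-(1 / p))) ^ p := by gcongr with j; exact hx j
    _ = N * (N : ℝ)⁻¹ := by
      rw [← Real.rpow_mul (Nat.cast_nonneg N), neg_mul, one_div_mul_cancel hp.ne',
        Real.rpow_neg_one]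
      simp
    _ ≤ 1 := mul_inv_le_one
  rw [pNorm_ofReal hp.le]
  exact Real.rpow_le_one (by positivity) hsum (by positivity)

end pNorm

section Kolmogorov

variable {N : ℕ} {p : ℝ}

lemma dotProduct_le_sum_abs_mul_pNorm_top {w x v : Fin N → ℝ} (hv : w ⬝ᵥ v = 0) :
    w ⬝ᵥ x ≤ (∑ j, |w j|) * pNorm ∞ (x - v) := calc
  w ⬝ᵥ x = w ⬝ᵥ (x - v) := by rw [dotProduct_sub, hv, sub_zero]
  _ ≤ ∑ j, |w j| * pNorm ∞ (x - v) := by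
    refine Finset.sum_le_sum fun j _ => (le_abs_self _).trans ?_
    rw [abs_mul]
    gcongr
    exact abs_apply_le_pNorm_top (x - v) j
  _ = (∑ j, |w j|) * pNorm ∞ (x - v) := (Finset.sum_mul _ _ _).symm

lemma le_kolmogorovNumber_top (hp : 0 < p) {n : ℕ} (hn : 0 < n) {B : ℝ}
    (h : ∀ V : Submodule ℝ (Fin N → ℝ), finrank ℝ V < n →
      ∃ x, pNorm (ENNReal.ofReal p) x ≤ 1 ∧ ∀ v ∈ V, B ≤ pNorm ∞ (x - v)) :
    B ≤ kolmogorovNumber (ENNReal.ofReal p) ∞ N n := by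
  refine le_csInf ⟨_, ⊥, by simpa using hn, rfl⟩ ?_
  rintro r ⟨V, hV, rfl⟩
  obtain ⟨x₀, hx₀, hfar⟩ := h V hV
  have hdist_le : ∀ x : Fin N → ℝ,
      sInf {t | ∃ v ∈ V, t = pNorm ∞ (x - v)} ≤ pNorm (ENNReal.ofReal p) x := fun x => calc
    _ ≤ pNorm ∞ (x - 0) := by
      refine csInf_le ⟨0, ?_⟩ ⟨0, V.zero_mem, rfl⟩
      rintro t ⟨v, -, rfl⟩
      exact pNorm_top_nonneg _
    _ ≤ pNorm (ENNReal.ofReal p) x := by rw [sub_zero]; exact pNorm_top_le_pNorm_ofReal hp x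
  have hbdd : BddAbove {s | ∃ x, pNorm (ENNReal.ofReal p) x ≤ 1 ∧
      s = sInf {t | ∃ v ∈ V, t = pNorm ∞ (x - v)}} := by
    refine ⟨1, ?_⟩
    rintro s ⟨x, hx, rfl⟩
    exact (hdist_le x).trans hx
  refine le_trans ?_ (le_csSup hbdd ⟨x₀, hx₀, rfl⟩)
  exact le_csInf ⟨_, 0, V.zero_mem, rfl⟩ fun t ⟨v, hv, ht⟩ => ht ▸ hfar v hv

lemma exists_far_of_flat (hp : 0 < p) {V : Submodule ℝ (Fin N → ℝ)} (hV : finrank ℝ V < N) :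
    ∃ x, pNorm (ENNReal.ofReal p) x ≤ 1 ∧ ∀ v ∈ V, (N : ℝ) ^ (-(1 / p)) ≤ pNorm ∞ (x - v) := by
  have : Nonempty (Fin N) := ⟨⟨0, by omega⟩⟩
  obtain ⟨w, i, hwV, -, hwi⟩ := V.exists_orthogonal_with_large_coord
  simp only [Fintype.card_fin] at hwi
  have hw : 0 < ∑ j, |w j| := by
    have hNV : (finrank ℝ V : ℝ) < N := by exact_mod_cast hV
    have hwi_pos : 0 < w i := pos_of_mul_pos_right (by linarith) (Nat.cast_nonneg N)
    exact hwi_pos.trans_le ((le_abs_self _).trans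
      (Finset.single_le_sum (f := fun j => |w j|) (fun j _ => abs_nonneg _) (Finset.mem_univ i)))
  set c := (N : ℝ) ^ (-(1 / p))
  refine ⟨fun j => c * SignType.sign (w j), pNorm_ofReal_le_one hp fun j => ?_, fun v hv => ?_⟩
  · rw [abs_mul, abs_of_nonneg (by positivity)]
    refine mul_le_of_le_one_right (by positivity) ?_
    rcases lt_trichotomy (w j) 0 with h | h | h <;> simp [h]
  · have h := dotProduct_le_sum_abs_mul_pNorm_top (x := fun j => c * SignType.sign (w j)) (hwV v hv)
    have hwx : w ⬝ᵥ (fun j => c * SignType.sign (w j)) = (∑ j, |w j|) * c := by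
      simp only [dotProduct, Finset.sum_mul]
      exact Finset.sum_congr rfl fun j _ => by rw [mul_left_comm, self_mul_sign, mul_comm]
    exact le_of_mul_le_mul_left (hwx ▸ h) hw

lemma exists_far_of_single (hp : 0 < p) {V : Submodule ℝ (Fin N → ℝ)} (hV : finrank ℝ V < N) :
    ∃ x, pNorm (ENNReal.ofReal p) x ≤ 1 ∧
      ∀ v ∈ V, (N - finrank ℝ V : ℝ) ≤ N ^ 2 * pNorm ∞ (x - v) ^ 2 := by
  have : Nonempty (Fin N) := ⟨⟨0, by omega⟩⟩
  obtain ⟨w, i, hwV, hww, hwi⟩ := V.exists_orthogonal_with_large_coord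
  simp only [Fintype.card_fin] at hwi
  have hwi_pos : 0 < w i := by
    have hNV : (finrank ℝ V : ℝ) < N := by exact_mod_cast hV
    exact pos_of_mul_pos_right (by linarith) (Nat.cast_nonneg N)
  refine ⟨Pi.single i 1, (pNorm_ofReal_single hp i).le, fun v hv => ?_⟩
  set d := pNorm ∞ (Pi.single i 1 - v)
  set L := ∑ j, |w j|
  have hdual : w i ≤ L * d := by
    simpa using dotProduct_le_sum_abs_mul_pNorm_top (x := Pi.single i 1) (hwV v hv)
  have hcs : L ^ 2 ≤ N * w i := by
    have := sq_sum_le_card_mul_sum_sq (s := Finset.univ) (f := fun j => |w j|)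
    simpa [sq_abs, ← hww, dotProduct, sq] using this
  have hsq : w i * w i ≤ w i * (N * d ^ 2) := calc
    w i * w i ≤ (L * d) ^ 2 := by nlinarith
    _ = L ^ 2 * d ^ 2 := mul_pow _ _ _
    _ ≤ N * w i * d ^ 2 := by gcongr
    _ = w i * (N * d ^ 2) := by ring
  calc (N - finrank ℝ V : ℝ) ≤ N * w i := hwi
    _ ≤ N * (N * d ^ 2) := by gcongr; exact le_of_mul_le_mul_left hsq hwi_pos
    _ = N ^ 2 * d ^ 2 := by ring

end Kolmogorov

lemma inv_seven_mul_rpow_neg_le {p n N : ℝ} (hp : 1 ≤ p) (hN : 0 < N) (hNn : N ≤ 7 * n) :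
    1 / 7 * n ^ (-(1 / p)) ≤ N ^ (-(1 / p)) := calc
  1 / 7 * n ^ (-(1 / p)) ≤ (7 : ℝ) ^ (-(1 / p)) * n ^ (-(1 / p)) := by
    refine mul_le_mul_of_nonneg_right ?_ (Real.rpow_nonneg (by linarith) _)
    rw [one_div, ← Real.rpow_neg_one]
    exact Real.rpow_le_rpow_of_exponent_le (by norm_num : (1 : ℝ) ≤ 7)
      (neg_le_neg ((div_le_one (by linarith)).mpr hp))
  _ = (7 * n) ^ (-(1 / p)) := (Real.mul_rpow (by norm_num) (by linarith)).symm
  _ ≤ N ^ (-(1 / p)) := Real.rpow_le_rpow_of_nonpos hN hNn (by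
    rw [Left.neg_nonpos_iff]; exact one_div_nonneg.mpr (by linarith))

lemma inv_seven_mul_rpow_neg_half_le {k n N t : ℝ} (hn : 0 < n) (hk : k + 1 ≤ n)
    (h4n : 4 * n ≤ N) (hNn : N ≤ 7 * n) (ht : 0 ≤ t) (hkt : N - k ≤ N ^ 2 * t ^ 2) :
    1 / 7 * n ^ (-(1 / 2) : ℝ) ≤ t := by
  have hNt : 3 / 4 ≤ N * t ^ 2 :=
    le_of_mul_le_mul_left (by nlinarith) (by linarith : (0 : ℝ) < N)
  have hsq : (1 / 7 * n ^ (-(1 / 2) : ℝ)) ^ 2 = (49 * n)⁻¹ := by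
    rw [mul_pow, ← Real.rpow_natCast (_ ^ _) 2, ← Real.rpow_mul hn.le]
    norm_num [Real.rpow_neg_one, mul_comm]
  refine le_of_pow_le_pow_left₀ two_ne_zero ht ?_
  rw [hsq, inv_le_iff_one_le_mul₀ (by positivity)]
  nlinarith [mul_le_mul_of_nonneg_right hNn (sq_nonneg t)]

/-- For `1 ≤ p₁ < ∞` and `β = max(2,p₁)` there is `C > 0` such that for every
`N ≥ 4` and `n = ⌊N/4⌋`, `d_n(id : ℓ_{p₁}^N → ℓ_∞^N) ≥ C·n^{-1/β}`. -/
theorem kolmogorov_lower_quarter (p₁ : ℝ) (hp1 : 1 ≤ p₁) :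
    ∃ C : ℝ, 0 < C ∧ ∀ N : ℕ, 4 ≤ N →
      C * ((N / 4 : ℕ) : ℝ) ^ (-(1 / max 2 p₁)) ≤
        kolmogorovNumber (ENNReal.ofReal p₁) ∞ N (N / 4) := by
  have hp : 0 < p₁ := by linarith
  refine ⟨1 / 7, by norm_num, fun N hN => le_kolmogorovNumber_top hp (by omega) fun V hV => ?_⟩
  have hVN : finrank ℝ V < N := by omega
  have hNn : (N : ℝ) ≤ 7 * (N / 4 : ℕ) := by exact_mod_cast (show N ≤ 7 * (N / 4) by omega)
  rcases le_or_gt 2 p₁ with hp2 | hp2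
  · obtain ⟨x, hx, hfar⟩ := exists_far_of_flat hp hVN
    refine ⟨x, hx, fun v hv => ?_⟩
    rw [max_eq_right hp2]
    exact (inv_seven_mul_rpow_neg_le hp1 (by exact_mod_cast (show 0 < N by omega)) hNn).trans
      (hfar v hv)
  · obtain ⟨x, hx, hfar⟩ := exists_far_of_single hp hVN
    refine ⟨x, hx, fun v hv => ?_⟩
    rw [max_eq_left hp2.le]
    exact inv_seven_mul_rpow_neg_half_le (by exact_mod_cast (show 0 < N / 4 by omega))
      (by exact_mod_cast hV) (by exact_mod_cast (show 4 * (N / 4) ≤ N by omega)) hNn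
      (pNorm_top_nonneg _) (hfar v hv)
end
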